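/- For every positive integer n, the 2-adic valuation of SPP_n = ∏_{1≤j≤i≤n} (i+j+n-1)/(i+j-1) equals n + ∑_{j=1}^n (s_2(2n-j) - s_2(3n+1-2j)). -/
import Mathlib

open Finset

def s2 (m : ℕ) : ℕ := (Nat.digits 2 m).sum

lemma s2_two_mul (m : ℕ) : s2 (2 * m) = s2 m := by
  rcases Nat.eq_zero_or_pos m with h | h
  · simp [h, s2]
  · unfold s2
    rw [Nat.digits_def' (by norm_num : 1 < 2) (by omega)]
    have h1 : 2 * m % 2 = 0 := by omega
    have h2 : 2 * m / 2 = m := by omega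
    rw [h1, h2]
    simp

lemma s2_two_mul_add_one (m : ℕ) : s2 (2 * m + 1) = s2 m + 1 := by
  unfold s2
  rw [Nat.digits_def' (by norm_num : 1 < 2) (by omega)]
  have h1 : (2 * m + 1) % 2 = 1 := by omega
  have h2 : (2 * m + 1) / 2 = m := by omega
  rw [h1, h2]
  simp [Nat.add_comm]

lemma sum_range_double {M : Type*} [AddCommMonoid M] (f : ℕ → M) (n : ℕ) :
    ∑ t ∈ range (2 * n), f t = ∑ k ∈ range n, (f (2 * k) + f (2 * k + 1)) := by
  induction n with
  | zero => simp
  | succ n ih =>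
    have h : 2 * (n + 1) = (2 * n + 1) + 1 := by ring
    rw [h, Finset.sum_range_succ, Finset.sum_range_succ, ih, Finset.sum_range_succ, add_assoc]

lemma s2_shift_sum (n : ℕ) : ∑ t ∈ range n, s2 (n + t) = n + ∑ t ∈ range n, s2 t := by
  have h1 : ∑ t ∈ range (2 * n), s2 t = 2 * (∑ t ∈ range n, s2 t) + n := by
    rw [sum_range_double]
    have h : ∀ k ∈ range n, s2 (2 * k) + s2 (2 * k + 1) = 2 * s2 k + 1 := by
      intro k _
      rw [s2_two_mul, s2_two_mul_add_one]; ring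
    rw [Finset.sum_congr rfl h, Finset.sum_add_distrib, ← Finset.mul_sum]
    simp
  have h2 : ∑ t ∈ range (2 * n), s2 t = (∑ t ∈ range n, s2 t) + ∑ t ∈ range n, s2 (n + t) := by
    have h : 2 * n = n + n := by ring
    rw [h, Finset.sum_range_add]
  omega

/-- partial sums of 2-adic valuations -/
def Tv (m : ℕ) : ℤ := ∑ k ∈ Finset.Icc 1 m, (padicValNat 2 k : ℤ)

lemma Tv_factorial (m : ℕ) : Tv m = (padicValNat 2 (Nat.factorial m) : ℤ) := by
  haveI : Fact (Nat.Prime 2) := ⟨Nat.prime_two⟩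
  induction m with
  | zero => simp [Tv]
  | succ m ih =>
    rw [Tv, Finset.sum_Icc_succ_top (by omega), ← Tv, ih, Nat.factorial_succ,
        padicValNat.mul (by omega) (Nat.factorial_ne_zero m)]
    push_cast
    ring

lemma Tv_eq (m : ℕ) : Tv m = (m : ℤ) - s2 m := by
  haveI : Fact (Nat.Prime 2) := ⟨Nat.prime_two⟩
  rw [Tv_factorial]
  have h := sub_one_mul_padicValNat_factorial (p := 2) m
  have hle : s2 m ≤ m := Nat.digit_sum_le 2 m
  have h' : padicValNat 2 (Nat.factorial m) = m - s2 m := by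
    simpa [s2] using h
  rw [h']
  omega

lemma sum_Icc_val (a b : ℕ) (ha : 1 ≤ a) (hab : a ≤ b + 1) :
    ∑ k ∈ Finset.Icc a b, (padicValNat 2 k : ℤ) = Tv b - Tv (a - 1) := by
  have key := Finset.sum_Ico_consecutive (fun k => (padicValNat 2 k : ℤ))
    (ha : 1 ≤ a) (hab : a ≤ b + 1)
  have h1 : Tv b = ∑ k ∈ Finset.Ico 1 (b + 1), (padicValNat 2 k : ℤ) := by
    rw [Tv, Finset.Ico_add_one_right_eq_Icc]
  have h2 : Tv (a - 1) = ∑ k ∈ Finset.Ico 1 a, (padicValNat 2 k : ℤ) := by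
    have e : Finset.Ico 1 a = Finset.Icc 1 (a - 1) := by
      ext x
      simp only [Finset.mem_Ico, Finset.mem_Icc]
      omega
    rw [Tv, e]
  have h3 : ∑ k ∈ Finset.Icc a b, (padicValNat 2 k : ℤ)
      = ∑ k ∈ Finset.Ico a (b + 1), (padicValNat 2 k : ℤ) := by
    rw [Finset.Ico_add_one_right_eq_Icc]
  rw [h1, h2, h3]
  linarith [key]

lemma sum_Icc_shift {M : Type*} [AddCommMonoid M] (f : ℕ → M) (a b c : ℕ) :
    ∑ i ∈ Finset.Icc a b, f (i + c) = ∑ k ∈ Finset.Icc (a + c) (b + c), f k := by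
  rw [← Finset.Ico_add_one_right_eq_Icc, ← Finset.Ico_add_one_right_eq_Icc, Finset.sum_Ico_eq_sum_range,
      Finset.sum_Ico_eq_sum_range]
  have h : b + c + 1 - (a + c) = b + 1 - a := by omega
  rw [h]
  exact Finset.sum_congr rfl fun t _ => by congr 1; omega

lemma padicValRat_prod {ι : Type*} (p : ℕ) [Fact (Nat.Prime p)] (s : Finset ι) (f : ι → ℚ)
    (hf : ∀ i ∈ s, f i ≠ 0) :
    padicValRat p (∏ i ∈ s, f i) = ∑ i ∈ s, padicValRat p (f i) := by
  induction s using Finset.cons_induction with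
  | empty => simp
  | cons a s ha ih =>
    rw [Finset.prod_cons, Finset.sum_cons,
      padicValRat.mul (hf a (Finset.mem_cons_self a s))
        (Finset.prod_ne_zero_iff.mpr fun i hi => hf i (Finset.mem_cons_of_mem hi)),
      ih fun i hi => hf i (Finset.mem_cons_of_mem hi)]

theorem v2_SPP (n : ℕ) (hn : 0 < n) :
    padicValRat 2 (∏ j ∈ Finset.Icc 1 n, ∏ i ∈ Finset.Icc j n,
        (((i : ℚ) + j + n - 1) / ((i : ℚ) + j - 1))) =
      n + ∑ j ∈ Finset.Icc 1 n,
        ((s2 (2 * n - j) : ℤ) - (s2 (3 * n + 1 - 2 * j) : ℤ)) := by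
  haveI : Fact (Nat.Prime 2) := ⟨Nat.prime_two⟩
  -- Step 1: rewrite each factor with natural-number casts
  have hprod : (∏ j ∈ Finset.Icc 1 n, ∏ i ∈ Finset.Icc j n,
        (((i : ℚ) + j + n - 1) / ((i : ℚ) + j - 1)))
      = ∏ j ∈ Finset.Icc 1 n, ∏ i ∈ Finset.Icc j n,
        (((i + j + n - 1 : ℕ) : ℚ) / ((i + j - 1 : ℕ) : ℚ)) := by
    refine Finset.prod_congr rfl fun j hj => Finset.prod_congr rfl fun i hi => ?_
    simp only [Finset.mem_Icc] at hj hi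
    rw [Nat.cast_sub (by omega), Nat.cast_sub (by omega)]
    push_cast
    ring
  rw [hprod]
  have hne : ∀ j ∈ Finset.Icc 1 n, ∀ i ∈ Finset.Icc j n,
      (((i + j + n - 1 : ℕ) : ℚ) / ((i + j - 1 : ℕ) : ℚ)) ≠ 0 := by
    intro j hj i hi
    simp only [Finset.mem_Icc] at hj hi
    exact div_ne_zero (by rw [Nat.cast_ne_zero]; omega) (by rw [Nat.cast_ne_zero]; omega)
  rw [padicValRat_prod 2 _ _ (fun j hj => Finset.prod_ne_zero_iff.mpr (hne j hj))]
  -- Step 2: valuation of each inner product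
  have hstep : ∀ j ∈ Finset.Icc 1 n,
      padicValRat 2 (∏ i ∈ Finset.Icc j n, (((i + j + n - 1 : ℕ) : ℚ) / ((i + j - 1 : ℕ) : ℚ)))
        = (Tv (2 * n + j - 1) - Tv (n + 2 * j - 2)) - (Tv (n + j - 1) - Tv (2 * j - 2)) := by
    intro j hj
    rw [padicValRat_prod 2 _ _ (hne j hj)]
    simp only [Finset.mem_Icc] at hj
    obtain ⟨hj1, hj2⟩ := hj
    have hfac : ∀ i ∈ Finset.Icc j n,
        padicValRat 2 (((i + j + n - 1 : ℕ) : ℚ) / ((i + j - 1 : ℕ) : ℚ))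
        = (padicValNat 2 (i + (j + n - 1)) : ℤ) - (padicValNat 2 (i + (j - 1)) : ℤ) := by
      intro i hi
      simp only [Finset.mem_Icc] at hi
      rw [padicValRat.div (by rw [Nat.cast_ne_zero]; omega) (by rw [Nat.cast_ne_zero]; omega),
          padicValRat.of_nat, padicValRat.of_nat]
      have e1 : i + j + n - 1 = i + (j + n - 1) := by omega
      have e2 : i + j - 1 = i + (j - 1) := by omega
      rw [e1, e2]
    rw [Finset.sum_congr rfl hfac, Finset.sum_sub_distrib,
        sum_Icc_shift (fun k => (padicValNat 2 k : ℤ)) j n (j + n - 1),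
        sum_Icc_shift (fun k => (padicValNat 2 k : ℤ)) j n (j - 1),
        sum_Icc_val _ _ (by omega) (by omega), sum_Icc_val _ _ (by omega) (by omega)]
    have a1 : n + (j + n - 1) = 2 * n + j - 1 := by omega
    have a2 : j + (j + n - 1) - 1 = n + 2 * j - 2 := by omega
    have a3 : n + (j - 1) = n + j - 1 := by omega
    have a4 : j + (j - 1) - 1 = 2 * j - 2 := by omega
    rw [a1, a2, a3, a4]
  rw [Finset.sum_congr rfl hstep]
  -- Step 3: convert sums over `Icc 1 n` to sums over `range n`
  have hIccL : ∑ j ∈ Finset.Icc 1 n,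
      ((Tv (2 * n + j - 1) - Tv (n + 2 * j - 2)) - (Tv (n + j - 1) - Tv (2 * j - 2)))
      = ∑ k ∈ range n,
        ((s2 (n + 2 * k) : ℤ) + (s2 (n + k) : ℤ) - (s2 (2 * n + k) : ℤ) - (s2 k : ℤ)) := by
    rw [← Finset.Ico_add_one_right_eq_Icc, Finset.sum_Ico_eq_sum_range]
    simp only [Nat.succ_sub_one, Nat.add_sub_cancel]
    refine Finset.sum_congr rfl fun k hk => ?_
    simp only [Finset.mem_range] at hk
    have a1 : 2 * n + (1 + k) - 1 = 2 * n + k := by omega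
    have a2 : n + 2 * (1 + k) - 2 = n + 2 * k := by omega
    have a3 : n + (1 + k) - 1 = n + k := by omega
    have a4 : 2 * (1 + k) - 2 = 2 * k := by omega
    rw [a1, a2, a3, a4, Tv_eq, Tv_eq, Tv_eq, Tv_eq, s2_two_mul]
    push_cast
    ring
  have hIccR : ∑ j ∈ Finset.Icc 1 n, ((s2 (2 * n - j) : ℤ) - (s2 (3 * n + 1 - 2 * j) : ℤ))
      = ∑ k ∈ range n, ((s2 (2 * n - 1 - k) : ℤ) - (s2 (3 * n - 1 - 2 * k) : ℤ)) := by
    rw [← Finset.Ico_add_one_right_eq_Icc, Finset.sum_Ico_eq_sum_range]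
    simp only [Nat.succ_sub_one, Nat.add_sub_cancel]
    refine Finset.sum_congr rfl fun k hk => ?_
    simp only [Finset.mem_range] at hk
    have a1 : 2 * n - (1 + k) = 2 * n - 1 - k := by omega
    have a2 : 3 * n + 1 - 2 * (1 + k) = 3 * n - 1 - 2 * k := by omega
    rw [a1, a2]
  rw [hIccL, hIccR]
  -- Step 4: the combinatorial identity on digit sums
  set A := ∑ k ∈ range n, s2 (n + 2 * k) with hA
  set B := ∑ k ∈ range n, s2 (n + k) with hB
  set C := ∑ k ∈ range n, s2 (2 * n + k) with hC
  set D := ∑ k ∈ range n, s2 k with hD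
  set E := ∑ k ∈ range n, s2 (2 * n - 1 - k) with hE
  set F := ∑ k ∈ range n, s2 (3 * n - 1 - 2 * k) with hF
  have fact1 : E = B := by
    rw [hE, hB, ← Finset.sum_range_reflect (fun k => s2 (2 * n - 1 - k)) n]
    refine Finset.sum_congr rfl fun k hk => ?_
    simp only [Finset.mem_range] at hk
    congr 1
    omega
  have fact2 : F = ∑ k ∈ range n, s2 (n + 2 * k + 1) := by
    rw [hF, ← Finset.sum_range_reflect (fun k => s2 (3 * n - 1 - 2 * k)) n]
    refine Finset.sum_congr rfl fun k hk => ?_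
    simp only [Finset.mem_range] at hk
    congr 1
    omega
  have fact3 : A + F = B + C := by
    rw [fact2, hA, ← Finset.sum_add_distrib]
    have h1 : ∑ k ∈ range n, (s2 (n + 2 * k) + s2 (n + 2 * k + 1))
        = ∑ t ∈ range (2 * n), s2 (n + t) := by
      rw [sum_range_double (fun t => s2 (n + t)) n]
      refine Finset.sum_congr rfl fun k _ => ?_
      show s2 (n + 2 * k) + s2 (n + 2 * k + 1) = s2 (n + 2 * k) + s2 (n + (2 * k + 1))
      have e : n + (2 * k + 1) = n + 2 * k + 1 := by omega
      rw [e]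
    rw [h1]
    have h2 : (2 : ℕ) * n = n + n := by ring
    rw [h2, Finset.sum_range_add]
    rw [hB, hC]
    congr 1
    refine Finset.sum_congr rfl fun k _ => ?_
    congr 1
    omega
  have fact4 : B = n + D := by rw [hB, hD]; exact s2_shift_sum n
  -- assemble
  have cast1 : ∑ k ∈ range n,
      ((s2 (n + 2 * k) : ℤ) + (s2 (n + k) : ℤ) - (s2 (2 * n + k) : ℤ) - (s2 k : ℤ))
      = (A : ℤ) + B - C - D := by
    rw [hA, hB, hC, hD]
    push_cast
    rw [Finset.sum_sub_distrib, Finset.sum_sub_distrib, Finset.sum_add_distrib]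
  have cast2 : ∑ k ∈ range n, ((s2 (2 * n - 1 - k) : ℤ) - (s2 (3 * n - 1 - 2 * k) : ℤ))
      = (E : ℤ) - F := by
    rw [hE, hF]
    push_cast
    rw [Finset.sum_sub_distrib]
  rw [cast1, cast2]
  have z1 : (E : ℤ) = B := by exact_mod_cast congrArg (Nat.cast : ℕ → ℤ) fact1
  have z3 : (A : ℤ) + F = B + C := by exact_mod_cast congrArg (Nat.cast : ℕ → ℤ) fact3
  have z4 : (B : ℤ) = n + D := by exact_mod_cast congrArg (Nat.cast : ℕ → ℤ) fact4
  linarith
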